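/- Let d ≥ 1 and define φ₁ : [0,∞) → [0,∞) by φ₁(t) = 0 for t ≤ 1 and φ₁(t) = 1/γ_d for t > 1 (this φ₁ belongs to 𝒜). Then for every φ ∈ 𝒜 one has κ(φ) ≥ κ(φ₁). -/

import Mathlib

open MeasureTheory Filter Set Topology
open scoped ENNReal NNReal


/-- `γ_d = ∫_{S^{d-1}} |σ·e| dσ = 2 |B^{d-1}|`, the normalizing constant. -/
noncomputable def gammad (d : ℕ) : ℝ :=
  2 * (volume (Metric.ball (0 : EuclideanSpace ℝ (Fin (d - 1))) 1)).toReal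

lemma gammad_pos (d : ℕ) : 0 < gammad d := by
  have h1 : (0:ℝ≥0∞) < volume (Metric.ball (0 : EuclideanSpace ℝ (Fin (d-1))) 1) :=
    Metric.measure_ball_pos _ _ one_pos
  have h2 : volume (Metric.ball (0 : EuclideanSpace ℝ (Fin (d-1))) 1) ≠ ⊤ :=
    measure_ball_lt_top.ne
  have h3 := ENNReal.toReal_pos h1.ne' h2
  unfold gammad; linarith


/-- The nonlocal functional `Λ_δ(u, φ, Ω)`. -/
noncomputable def Lam (d : ℕ) (δ : ℝ) (φ : ℝ → ℝ)
    (u : EuclideanSpace ℝ (Fin d) → ℝ)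
    (Ω : Set (EuclideanSpace ℝ (Fin d))) : ℝ≥0∞ :=
  ENNReal.ofReal δ *
    ∫⁻ p in Ω ×ˢ Ω,
      ENNReal.ofReal (φ (|u p.1 - u p.2| / δ) / dist p.1 p.2 ^ (d + 1))

/-- The class `𝒜` of admissible functions `φ`. -/
structure MemA (d : ℕ) (φ : ℝ → ℝ) : Prop where
  nonneg : ∀ t, 0 ≤ t → 0 ≤ φ t
  mono : MonotoneOn φ (Ici (0 : ℝ))
  lsc : LowerSemicontinuousOn φ (Ici (0 : ℝ))
  map_zero : φ 0 = 0
  quad : ∃ a > (0 : ℝ), ∀ t ∈ Icc (0 : ℝ) 1, φ t ≤ a * t ^ 2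
  bdd : ∃ b > (0 : ℝ), ∀ t, 0 ≤ t → φ t ≤ b
  normalized : gammad d * ∫ t in Ioi (0 : ℝ), φ t / t ^ 2 = 1

/-- The open unit cube `Q = (0,1)^d`. -/
def cube (d : ℕ) : Set (EuclideanSpace ℝ (Fin d)) :=
  {x | ∀ i, x i ∈ Set.Ioo (0 : ℝ) 1}

/-- The function `U(x) = (x₁ + ⋯ + x_d)/√d` on `Q`, with `∫_Q ‖∇U‖ = 1`. -/
noncomputable def UU (d : ℕ) : EuclideanSpace ℝ (Fin d) → ℝ :=
  fun x => (∑ i, x i) / Real.sqrt d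

/-- The constant `κ(φ)`: the infimum of `liminf_{δ→0⁺} Λ_δ(v_δ, φ, Q)` over all families
`(v_δ)_{δ∈(0,1)}` of integrable functions on `Q` with `v_δ → U` in `L¹(Q)`. -/
noncomputable def kappa (d : ℕ) (φ : ℝ → ℝ) : ℝ≥0∞ :=
  ⨅ (v : ℝ → EuclideanSpace ℝ (Fin d) → ℝ)
    (_ : (∀ δ ∈ Set.Ioo (0 : ℝ) 1, IntegrableOn (v δ) (cube d)) ∧
      Tendsto (fun δ => ∫ x in cube d, |v δ x - UU d x|) (𝓝[>] (0 : ℝ)) (𝓝 0)),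
    Filter.liminf (fun δ => Lam d δ φ (v δ) (cube d)) (𝓝[>] (0 : ℝ))

/-! ### helpers -/


lemma liminf_add_liminf_le {α : Type*} {l : Filter α} (f g : α → ℝ≥0∞) :
    liminf f l + liminf g l ≤ liminf (fun x => f x + g x) l := by
  rw [liminf_eq, liminf_eq]
  have hSf : (0:ℝ≥0∞) ∈ {a : ℝ≥0∞ | ∀ᶠ x in l, a ≤ f x} :=
    Eventually.of_forall fun x => zero_le
  have hSg : (0:ℝ≥0∞) ∈ {a : ℝ≥0∞ | ∀ᶠ x in l, a ≤ g x} :=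
    Eventually.of_forall fun x => zero_le
  haveI : Nonempty {a : ℝ≥0∞ | ∀ᶠ x in l, a ≤ f x} := ⟨⟨0, hSf⟩⟩
  haveI : Nonempty {a : ℝ≥0∞ | ∀ᶠ x in l, a ≤ g x} := ⟨⟨0, hSg⟩⟩
  rw [sSup_eq_iSup' {a : ℝ≥0∞ | ∀ᶠ x in l, a ≤ f x},
    sSup_eq_iSup' {a : ℝ≥0∞ | ∀ᶠ x in l, a ≤ g x}]
  refine ENNReal.iSup_add_iSup_le ?_
  rintro ⟨a, ha⟩ ⟨b, hb⟩
  have : ∀ᶠ x in l, a + b ≤ f x + g x := (ha.and hb).mono fun x hx => add_le_add hx.1 hx.2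
  exact le_liminf_of_le (by isBoundedDefault) this

lemma mul_liminf_le {α : Type*} {l : Filter α} (c : ℝ≥0∞) (f : α → ℝ≥0∞) :
    c * liminf f l ≤ liminf (fun x => c * f x) l := by
  rw [liminf_eq]
  have hSf : (0:ℝ≥0∞) ∈ {a : ℝ≥0∞ | ∀ᶠ x in l, a ≤ f x} :=
    Eventually.of_forall fun x => zero_le
  rw [sSup_eq_iSup' {a : ℝ≥0∞ | ∀ᶠ x in l, a ≤ f x}, ENNReal.mul_iSup]
  refine iSup_le ?_
  rintro ⟨a, ha⟩
  exact le_liminf_of_le (by isBoundedDefault) (ha.mono fun x hx => mul_le_mul_right hx c)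

lemma sum_liminf_le {α : Type*} {l : Filter α} (N : ℕ) (F : ℕ → α → ℝ≥0∞) :
    ∑ k ∈ Finset.range N, liminf (F k) l
      ≤ liminf (fun x => ∑ k ∈ Finset.range N, F k x) l := by
  induction N with
  | zero => simp
  | succ n ih =>
    simp only [Finset.sum_range_succ]
    calc (∑ k ∈ Finset.range n, liminf (F k) l) + liminf (F n) l
        ≤ liminf (fun x => ∑ k ∈ Finset.range n, F k x) l + liminf (F n) l :=
          add_le_add ih le_rfl
      _ ≤ liminf (fun x => (∑ k ∈ Finset.range n, F k x) + F n x) l :=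
          liminf_add_liminf_le _ _

lemma tendsto_mul_left_nhdsGT_zero {s : ℝ} (hs : 0 < s) :
    Tendsto (fun δ : ℝ => s * δ) (𝓝[>] 0) (𝓝[>] 0) := by
  refine tendsto_nhdsWithin_of_tendsto_nhds_of_eventually_within _ ?_ ?_
  · have h : Tendsto (fun δ : ℝ => s * δ) (𝓝 0) (𝓝 (s * 0)) :=
      (continuous_const.mul continuous_id).tendsto 0
    simpa using h.mono_left nhdsWithin_le_nhds
  · filter_upwards [self_mem_nhdsWithin] with δ (hδ : 0 < δ)
    exact mul_pos hs hδ

lemma liminf_comp_mul_left {G : ℝ → ℝ≥0∞} {s : ℝ} (hs : 0 < s) :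
    liminf G (𝓝[>] 0) ≤ liminf (fun δ => G (s * δ)) (𝓝[>] 0) := by
  have h1 : liminf (fun δ => G (s * δ)) (𝓝[>] (0:ℝ))
      = liminf G (map (fun δ : ℝ => s * δ) (𝓝[>] 0)) := by
    rw [liminf_eq, liminf_eq]
    congr 1
  rw [h1]
  exact liminf_le_liminf_of_le (tendsto_mul_left_nhdsGT_zero hs)

lemma integrable_inv_sq {s : ℝ} (hs : 0 < s) :
    IntegrableOn (fun t : ℝ => 1 / t ^ 2) (Ioi s) ∧
      ∫ t in Ioi s, 1 / t ^ 2 = 1 / s := by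
  have h : ∀ x ∈ Ioi s, HasDerivAt (fun t : ℝ => -t⁻¹) (1 / x ^ 2) x := by
    intro x hx
    have hx0 : (0:ℝ) < x := lt_trans hs hx
    have h' : HasDerivAt (fun t : ℝ => t⁻¹) (-(x ^ 2)⁻¹) x := hasDerivAt_inv hx0.ne'
    simpa [one_div] using h'.fun_neg
  have hcont : ContinuousWithinAt (fun t : ℝ => -t⁻¹) (Ici s) s :=
    ((continuousAt_inv₀ hs.ne').neg).continuousWithinAt
  have htend : Tendsto (fun t : ℝ => -t⁻¹) atTop (𝓝 0) := by
    have h0 : Tendsto (fun t : ℝ => t⁻¹) atTop (𝓝 (0:ℝ)) := tendsto_inv_atTop_zero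
    simpa using h0.neg
  constructor
  · exact integrableOn_Ioi_deriv_of_nonneg hcont h (fun x hx => by positivity) htend
  · have := integral_Ioi_of_hasDerivAt_of_nonneg hcont h (fun x hx => by positivity) htend
    simpa [one_div] using this

lemma lintegral_inv_sq {s : ℝ} (hs : 0 < s) :
    ∫⁻ t in Ioi s, ENNReal.ofReal (1 / t ^ 2) = ENNReal.ofReal (1 / s) := by
  obtain ⟨hint, hval⟩ := integrable_inv_sq hs
  rw [← hval]
  exact (ofReal_integral_eq_lintegral_ofReal hint
    (Eventually.of_forall fun t => by positivity)).symm

lemma lintegral_step {c s : ℝ} (hc : 0 ≤ c) (hs : 0 < s) :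
    ∫⁻ t in Ioi (0:ℝ), ENNReal.ofReal ((c * if t ≤ s then 0 else 1) / t ^ 2)
      = ENNReal.ofReal (c / s) := by
  have hpt : ∀ t : ℝ, ENNReal.ofReal ((c * if t ≤ s then 0 else 1) / t ^ 2)
      = (Ioi s).indicator (fun t => ENNReal.ofReal c * ENNReal.ofReal (1 / t ^ 2)) t := by
    intro t
    by_cases h : t ≤ s
    · simp [h, indicator, not_lt.2 h]
    · have ht : t ∈ Ioi s := not_le.1 h
      rw [indicator_of_mem ht, ← ENNReal.ofReal_mul hc]
      simp [h, mul_one_div, div_eq_mul_inv]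
  simp only [hpt]
  rw [lintegral_indicator measurableSet_Ioi, Measure.restrict_restrict measurableSet_Ioi,
    inter_eq_self_of_subset_left (Ioi_subset_Ioi hs.le),
    lintegral_const_mul' _ _ ENNReal.ofReal_ne_top, lintegral_inv_sq hs,
    ← ENNReal.ofReal_mul hc, mul_one_div]



lemma div_le_div_same_nonneg {a b c : ℝ} (h : a ≤ b) (hc : 0 ≤ c) : a / c ≤ b / c := by
  exact div_le_div_of_nonneg_right h hc

lemma Lam_mono_phi (d : ℕ) {δ : ℝ} (hδ : 0 < δ) {φ ψ : ℝ → ℝ}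
    (h : ∀ t, 0 ≤ t → ψ t ≤ φ t) (u : EuclideanSpace ℝ (Fin d) → ℝ)
    (Ω : Set (EuclideanSpace ℝ (Fin d))) : Lam d δ ψ u Ω ≤ Lam d δ φ u Ω := by
  unfold Lam
  refine mul_le_mul_right (lintegral_mono fun p => ?_) _
  refine ENNReal.ofReal_le_ofReal (div_le_div_same_nonneg ?_ (by positivity))
  exact h _ (by positivity)

lemma sum_lintegral_le {α : Type*} [MeasurableSpace α] {μ : Measure α} {ι : Type*}
    (s : Finset ι) (f : ι → α → ℝ≥0∞) :
    ∑ k ∈ s, ∫⁻ a, f k a ∂μ ≤ ∫⁻ a, ∑ k ∈ s, f k a ∂μ := by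
  classical
  induction s using Finset.induction with
  | empty => simp
  | insert j s' hj ih =>
    rw [Finset.sum_insert hj]
    calc (∫⁻ a, f j a ∂μ) + ∑ k ∈ s', ∫⁻ a, f k a ∂μ
        ≤ (∫⁻ a, f j a ∂μ) + ∫⁻ a, ∑ k ∈ s', f k a ∂μ := add_le_add le_rfl ih
      _ ≤ ∫⁻ a, f j a + ∑ k ∈ s', f k a ∂μ := le_lintegral_add _ _
      _ = ∫⁻ a, ∑ k ∈ insert j s', f k a ∂μ := by
          simp_rw [Finset.sum_insert hj]

lemma sum_Lam_le (d : ℕ) (δ : ℝ) (N : ℕ) (ψ : ℕ → ℝ → ℝ)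
    (hψ : ∀ k ∈ Finset.range N, ∀ t, 0 ≤ ψ k t)
    (u : EuclideanSpace ℝ (Fin d) → ℝ) (Ω : Set (EuclideanSpace ℝ (Fin d))) :
    ∑ k ∈ Finset.range N, Lam d δ (ψ k) u Ω
      ≤ Lam d δ (fun t => ∑ k ∈ Finset.range N, ψ k t) u Ω := by
  unfold Lam
  rw [← Finset.mul_sum]
  refine mul_le_mul_right ?_ _
  calc ∑ k ∈ Finset.range N, ∫⁻ p in Ω ×ˢ Ω,
        ENNReal.ofReal (ψ k (|u p.1 - u p.2| / δ) / dist p.1 p.2 ^ (d + 1))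
      ≤ ∫⁻ p in Ω ×ˢ Ω, ∑ k ∈ Finset.range N,
        ENNReal.ofReal (ψ k (|u p.1 - u p.2| / δ) / dist p.1 p.2 ^ (d + 1)) :=
        sum_lintegral_le _ _
    _ = ∫⁻ p in Ω ×ˢ Ω, ENNReal.ofReal
        ((∑ k ∈ Finset.range N, ψ k (|u p.1 - u p.2| / δ)) / dist p.1 p.2 ^ (d + 1)) := by
        refine lintegral_congr fun p => ?_
        rw [Finset.sum_div, ENNReal.ofReal_sum_of_nonneg]
        intro k hk
        have := hψ k hk (|u p.1 - u p.2| / δ)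
        positivity

lemma Lam_step_eq (d : ℕ) {δ s c : ℝ} (hδ : 0 < δ) (hs : 0 < s) (hc : 0 ≤ c)
    (u : EuclideanSpace ℝ (Fin d) → ℝ) (Ω : Set (EuclideanSpace ℝ (Fin d))) :
    Lam d δ (fun t => c * (if t ≤ s then 0 else 1)) u Ω
      = ENNReal.ofReal (gammad d * c / s) *
        Lam d (s * δ) (fun t => if t ≤ 1 then 0 else 1 / gammad d) u Ω := by
  have hγ : 0 < gammad d := gammad_pos d
  unfold Lam
  have hpt : ∀ p : EuclideanSpace ℝ (Fin d) × EuclideanSpace ℝ (Fin d),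
      ENNReal.ofReal ((c * if |u p.1 - u p.2| / δ ≤ s then 0 else 1) / dist p.1 p.2 ^ (d + 1))
        = ENNReal.ofReal (gammad d * c) *
          ENNReal.ofReal ((if |u p.1 - u p.2| / (s * δ) ≤ 1 then 0 else 1 / gammad d) /
            dist p.1 p.2 ^ (d + 1)) := by
    intro p
    have hiff : (|u p.1 - u p.2| / δ ≤ s) ↔ (|u p.1 - u p.2| / (s * δ) ≤ 1) := by
      rw [div_le_iff₀ hδ, div_le_one (mul_pos hs hδ)]
    rw [← ENNReal.ofReal_mul (by positivity)]
    by_cases h : |u p.1 - u p.2| / δ ≤ s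
    · simp [h, hiff.1 h]
    · have h' : ¬ (|u p.1 - u p.2| / (s * δ) ≤ 1) := fun hh => h (hiff.2 hh)
      simp only [h, h', if_false, mul_one]
      congr 1
      rw [div_div, mul_one_div, ← mul_div_mul_left c (dist p.1 p.2 ^ (d + 1)) hγ.ne']
  simp_rw [hpt]
  rw [lintegral_const_mul' _ _ ENNReal.ofReal_ne_top, ← mul_assoc, ← mul_assoc,
    ← ENNReal.ofReal_mul hδ.le, ← ENNReal.ofReal_mul (by positivity)]
  congr 2
  field_simp




/-- The grid approximation of `φ` from below by finite step functions. -/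
lemma grid_approx (d : ℕ) (φ : ℝ → ℝ) (hφ : MemA d φ) {ε : ℝ} (hε : 0 < ε) :
    ∃ (N : ℕ) (c s : ℕ → ℝ), (∀ k < N, 0 < s k) ∧ (∀ k < N, 0 ≤ c k) ∧
      (∀ t, 0 ≤ t → ∑ k ∈ Finset.range N, c k * (if t ≤ s k then 0 else 1) ≤ φ t) ∧
      1 - ε ≤ gammad d * ∑ k ∈ Finset.range N, c k / s k := by
  have hγ : 0 < gammad d := gammad_pos d
  set γ := gammad d with hγdef
  -- grid data
  set sm : ℕ → ℕ → ℝ := fun m k => ((k:ℝ) + 1) / 2 ^ m with hsm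
  set cm : ℕ → ℕ → ℝ := fun m k => φ (((k:ℝ) + 1) / 2 ^ m) - φ ((k:ℝ) / 2 ^ m) with hcm
  set ψ : ℕ → ℝ → ℝ :=
    fun m t => ∑ k ∈ Finset.range (4 ^ m), cm m k * (if t ≤ sm m k then 0 else 1) with hψ
  have h2m : ∀ m : ℕ, (0:ℝ) < 2 ^ m := fun m => by positivity
  have hsm_pos : ∀ m k, 0 < sm m k := fun m k => by
    simp only [hsm]; positivity
  have hcm_nonneg : ∀ m k, 0 ≤ cm m k := by
    intro m k
    have := hφ.mono (mem_Ici.2 (by positivity : (0:ℝ) ≤ (k:ℝ)/2^m))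
      (mem_Ici.2 (by positivity : (0:ℝ) ≤ ((k:ℝ)+1)/2^m))
      (by apply div_le_div_of_nonneg_right _ (h2m m).le; linarith)
    simp only [hcm]; linarith
  have htel : ∀ m j : ℕ, ∑ k ∈ Finset.range j, cm m k = φ ((j:ℝ) / 2 ^ m) := by
    intro m j
    have := Finset.sum_range_sub (fun k : ℕ => φ ((k:ℝ) / 2 ^ m)) j
    simp only [hcm]
    rw [show (∑ k ∈ Finset.range j, (φ (((k:ℝ) + 1) / 2 ^ m) - φ ((k:ℝ) / 2 ^ m)))
        = ∑ k ∈ Finset.range j, (φ ((((k+1):ℕ):ℝ) / 2 ^ m) - φ ((k:ℝ) / 2 ^ m)) by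
      refine Finset.sum_congr rfl fun k _ => by push_cast; ring_nf]
    rw [this]
    simp [hφ.map_zero]
  -- lower bound : ψ m t ≥ φ (j/2^m) when j ≤ 4^m, j/2^m < t
  have hlow : ∀ m j : ℕ, ∀ t : ℝ, j ≤ 4 ^ m → (j:ℝ) / 2 ^ m < t →
      φ ((j:ℝ) / 2 ^ m) ≤ ψ m t := by
    intro m j t hj hjt
    have hsub : Finset.range j ⊆ Finset.range (4 ^ m) := Finset.range_subset_range.2 hj
    have h1 : ∑ k ∈ Finset.range j, cm m k * (if t ≤ sm m k then 0 else 1)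
        = ∑ k ∈ Finset.range j, cm m k := by
      refine Finset.sum_congr rfl fun k hk => ?_
      have hk' : (k:ℝ) + 1 ≤ (j:ℝ) := by
        have := Finset.mem_range.1 hk
        exact_mod_cast this
      have hlt : sm m k < t := by
        refine lt_of_le_of_lt ?_ hjt
        exact div_le_div_of_nonneg_right hk' (h2m m).le
      rw [if_neg (not_le.2 hlt), mul_one]
    calc φ ((j:ℝ) / 2 ^ m) = ∑ k ∈ Finset.range j, cm m k := (htel m j).symm
      _ = ∑ k ∈ Finset.range j, cm m k * (if t ≤ sm m k then 0 else 1) := h1.symm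
      _ ≤ ψ m t := by
          refine Finset.sum_le_sum_of_subset_of_nonneg hsub fun k _ _ => ?_
          have := hcm_nonneg m k
          have : (0:ℝ) ≤ (if t ≤ sm m k then 0 else 1) := by split <;> norm_num
          positivity
  -- upper bound : ψ m t ≤ φ t for t ≥ 0
  have hupp : ∀ m n : ℕ, ∀ t : ℝ, 0 ≤ t →
      ∑ k ∈ Finset.range n, cm m k * (if t ≤ sm m k then 0 else 1) ≤ φ t := by
    intro m n
    induction n with
    | zero => intro t ht; simp [hφ.nonneg t ht]
    | succ n ih =>
      intro t ht
      rw [Finset.sum_range_succ]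
      by_cases h : t ≤ sm m n
      · rw [if_pos h, mul_zero, add_zero]; exact ih t ht
      · have hlt : sm m n < t := not_le.1 h
        have hall : ∀ k ∈ Finset.range (n+1), cm m k * (if t ≤ sm m k then 0 else 1) = cm m k := by
          intro k hk
          have hk' : (k:ℝ) ≤ (n:ℝ) := by
            have := Nat.lt_succ_iff.1 (Finset.mem_range.1 hk)
            exact_mod_cast this
          have hsmk : sm m k ≤ sm m n := by
            apply div_le_div_of_nonneg_right _ (h2m m).le; linarith
          rw [if_neg (not_le.2 (lt_of_le_of_lt hsmk hlt)), mul_one]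
        rw [← Finset.sum_range_succ]
        rw [Finset.sum_congr rfl hall, htel m (n+1)]
        refine hφ.mono (mem_Ici.2 (by positivity)) (mem_Ici.2 ht) ?_
        push_cast
        exact hlt.le
  -- eventual lower bound from lower semicontinuity
  have hE : ∀ t : ℝ, 0 < t → ∀ y : ℝ, y < φ t → ∀ᶠ m in atTop, y ≤ ψ m t := by
    intro t ht y hy
    have hlsc := hφ.lsc t (mem_Ici.2 ht.le) y hy
    rw [nhdsWithin_eq_nhds.2 (Ici_mem_nhds ht)] at hlsc
    obtain ⟨ε₀, hε₀, hb⟩ := Metric.eventually_nhds_iff.1 hlsc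
    set s₀ := max (t - ε₀ / 2) (t / 2) with hs₀def
    have hs₀pos : 0 < s₀ := lt_max_of_lt_right (by linarith)
    have hs₀lt : s₀ < t := max_lt (by linarith) (by linarith)
    have hy₀ : y < φ s₀ := by
      apply hb
      rw [Real.dist_eq, abs_of_nonpos (by linarith)]
      have := le_max_left (t - ε₀ / 2) (t / 2)
      simp only [hs₀def] at *
      linarith [le_max_left (t - ε₀ / 2) (t / 2)]
    have ev1 : ∀ᶠ m : ℕ in atTop, (1:ℝ) / 2 ^ m < t - s₀ := by
      have h0 : Tendsto (fun m : ℕ => (1:ℝ) / 2 ^ m) atTop (𝓝 0) := by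
        simp_rw [show ∀ m : ℕ, (1:ℝ)/2^m = (1/2:ℝ)^m by intro m; rw [div_pow, one_pow]]
        exact tendsto_pow_atTop_nhds_zero_of_lt_one (by norm_num) (by norm_num)
      exact h0.eventually_lt_const (by linarith)
    have ev2 : ∀ᶠ m : ℕ in atTop, s₀ ≤ (2:ℝ) ^ m := by
      have := tendsto_pow_atTop_atTop_of_one_lt (by norm_num : (1:ℝ) < 2)
      exact this.eventually_ge_atTop s₀
    filter_upwards [ev1, ev2] with m h1 h2
    set j := ⌈s₀ * 2 ^ m⌉₊ with hjdef
    have hj1 : s₀ ≤ (j:ℝ) / 2 ^ m := by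
      rw [le_div_iff₀ (h2m m)]
      exact Nat.le_ceil _
    have hjlt : (j:ℝ) < s₀ * 2 ^ m + 1 := Nat.ceil_lt_add_one (by positivity)
    have hj2 : (j:ℝ) / 2 ^ m < t := by
      rw [div_lt_iff₀ (h2m m)]
      have h1' : 1 < (t - s₀) * 2 ^ m := by
        have := (div_lt_iff₀ (h2m m)).1 h1
        linarith
      nlinarith [h2m m]
    have hj3 : j ≤ 4 ^ m := by
      have h4 : ((4:ℕ):ℝ) ^ m = (2:ℝ) ^ m * 2 ^ m := by
        rw [← mul_pow]; norm_num
      have : (j:ℝ) < ((4:ℕ):ℝ) ^ m + 1 := by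
        rw [h4]
        nlinarith [h2m m]
      have hcast : (j:ℝ) < ((4 ^ m + 1 : ℕ) : ℝ) := by push_cast at this ⊢; linarith
      exact Nat.lt_succ_iff.1 (by exact_mod_cast hcast)
    calc y ≤ φ s₀ := hy₀.le
      _ ≤ φ ((j:ℝ) / 2 ^ m) :=
          hφ.mono (mem_Ici.2 hs₀pos.le) (mem_Ici.2 (by positivity)) hj1
      _ ≤ ψ m t := hlow m j t hj3 hj2
  -- measurability
  have hmeas_term : ∀ m k : ℕ, Measurable fun t : ℝ =>
      ENNReal.ofReal ((cm m k * if t ≤ sm m k then 0 else 1) / t ^ 2) := by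
    intro m k
    apply ENNReal.measurable_ofReal.comp
    apply Measurable.div
    · apply Measurable.const_mul
      exact Measurable.ite measurableSet_Iic measurable_const measurable_const
    · exact measurable_id.pow_const 2
  have hmeas : ∀ m : ℕ, Measurable fun t : ℝ => ENNReal.ofReal (ψ m t / t ^ 2) := by
    intro m
    apply ENNReal.measurable_ofReal.comp
    apply Measurable.div _ (measurable_id.pow_const 2)
    apply Finset.measurable_sum
    intro k _
    apply Measurable.const_mul
    exact Measurable.ite measurableSet_Iic measurable_const measurable_const
  -- the normalization integral
  have hval : ∫ t in Ioi (0:ℝ), φ t / t ^ 2 = 1 / γ :=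
    eq_one_div_of_mul_eq_one_left (by rw [mul_comm]; exact hφ.normalized)
  have hInt : IntegrableOn (fun t => φ t / t ^ 2) (Ioi (0:ℝ)) := by
    by_contra hni
    have h0 := integral_undef hni
    rw [h0] at hval
    exact absurd hval.symm (one_div_ne_zero hγ.ne')
  have hIeq : ∫⁻ t in Ioi (0:ℝ), ENNReal.ofReal (φ t / t ^ 2) = ENNReal.ofReal (1 / γ) := by
    rw [← hval]
    refine (ofReal_integral_eq_lintegral_ofReal hInt ?_).symm
    exact (ae_restrict_iff' measurableSet_Ioi).2 (Eventually.of_forall fun t ht =>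
      div_nonneg (hφ.nonneg t (le_of_lt ht)) (sq_nonneg t))
  -- pointwise liminf bound
  have hpt : ∀ t ∈ Ioi (0:ℝ), ENNReal.ofReal (φ t / t ^ 2)
      ≤ liminf (fun m => ENNReal.ofReal (ψ m t / t ^ 2)) atTop := by
    intro t ht
    have ht' : (0:ℝ) < t := ht
    have ht2 : (0:ℝ) < t ^ 2 := by positivity
    by_contra hcon
    push_neg at hcon
    obtain ⟨b, hb1, hb2⟩ := exists_between hcon
    have hbtop : b ≠ ⊤ := (hb2.trans_le le_top).ne
    have hβ : b.toReal < φ t / t ^ 2 := (ENNReal.lt_ofReal_iff_toReal_lt hbtop).1 hb2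
    set β := b.toReal with hβdef
    have hβ0 : 0 ≤ β := ENNReal.toReal_nonneg
    set y := (β * t ^ 2 + φ t) / 2 with hydef
    have hβt : β * t ^ 2 < φ t := (lt_div_iff₀ ht2).1 hβ
    have hyφ : y < φ t := by rw [hydef]; linarith
    have hβy : β ≤ y / t ^ 2 := by
      rw [le_div_iff₀ ht2, hydef]; linarith
    have hev := hE t ht' y hyφ
    have hble : b ≤ liminf (fun m => ENNReal.ofReal (ψ m t / t ^ 2)) atTop := by
      refine le_liminf_of_le (by isBoundedDefault) ?_
      refine hev.mono fun m hm => ?_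
      calc b = ENNReal.ofReal β := (ENNReal.ofReal_toReal hbtop).symm
        _ ≤ ENNReal.ofReal (y / t ^ 2) := ENNReal.ofReal_le_ofReal hβy
        _ ≤ ENNReal.ofReal (ψ m t / t ^ 2) :=
            ENNReal.ofReal_le_ofReal (div_le_div_of_nonneg_right hm ht2.le)
    exact absurd hble (not_le.2 hb1)
  -- lintegral of the step approximation
  have hlint : ∀ m : ℕ, ∫⁻ t in Ioi (0:ℝ), ENNReal.ofReal (ψ m t / t ^ 2)
      = ENNReal.ofReal (∑ k ∈ Finset.range (4 ^ m), cm m k / sm m k) := by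
    intro m
    have hptw : ∀ t : ℝ, ENNReal.ofReal (ψ m t / t ^ 2)
        = ∑ k ∈ Finset.range (4 ^ m),
            ENNReal.ofReal ((cm m k * if t ≤ sm m k then 0 else 1) / t ^ 2) := by
      intro t
      simp only [hψ]
      rw [Finset.sum_div, ENNReal.ofReal_sum_of_nonneg]
      intro k _
      have h1 : (0:ℝ) ≤ (if t ≤ sm m k then 0 else 1) := by split <;> norm_num
      have h2 := hcm_nonneg m k
      positivity
    simp only [hptw]
    rw [lintegral_finset_sum _ (fun k _ => hmeas_term m k),
      ENNReal.ofReal_sum_of_nonneg (fun k _ => div_nonneg (hcm_nonneg m k) (hsm_pos m k).le)]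
    exact Finset.sum_congr rfl fun k _ => lintegral_step (hcm_nonneg m k) (hsm_pos m k)
  -- Fatou
  have hfatou : ENNReal.ofReal (1 / γ) ≤
      liminf (fun m => ENNReal.ofReal (∑ k ∈ Finset.range (4 ^ m), cm m k / sm m k)) atTop := by
    rw [← hIeq]
    calc ∫⁻ t in Ioi (0:ℝ), ENNReal.ofReal (φ t / t ^ 2)
        ≤ ∫⁻ t in Ioi (0:ℝ), liminf (fun m => ENNReal.ofReal (ψ m t / t ^ 2)) atTop := by
          refine lintegral_mono_ae ?_
          exact (ae_restrict_iff' measurableSet_Ioi).2 (Eventually.of_forall hpt)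
      _ ≤ liminf (fun m => ∫⁻ t in Ioi (0:ℝ), ENNReal.ofReal (ψ m t / t ^ 2)) atTop :=
          lintegral_liminf_le hmeas
      _ = _ := by simp only [hlint]
  -- extract a good m
  have hexist : ∃ m : ℕ, 1 / γ - ε / γ ≤ ∑ k ∈ Finset.range (4 ^ m), cm m k / sm m k := by
    by_contra hno
    push_neg at hno
    have hub : liminf (fun m => ENNReal.ofReal
        (∑ k ∈ Finset.range (4 ^ m), cm m k / sm m k)) atTop
        ≤ ENNReal.ofReal (1 / γ - ε / γ) :=
      liminf_le_of_frequently_le (Frequently.of_forall fun m =>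
        ENNReal.ofReal_le_ofReal (hno m).le)
    have hlt : ENNReal.ofReal (1 / γ - ε / γ) < ENNReal.ofReal (1 / γ) := by
      rw [ENNReal.ofReal_lt_ofReal_iff (by positivity)]
      have hpos : 0 < ε / γ := by positivity
      linarith
    exact absurd (hfatou.trans hub) (not_le.2 hlt)
  obtain ⟨m, hm⟩ := hexist
  refine ⟨4 ^ m, cm m, sm m, fun k _ => hsm_pos m k, fun k _ => hcm_nonneg m k,
    fun t ht => hupp m (4 ^ m) t ht, ?_⟩
  have hmul := mul_le_mul_of_nonneg_left hm hγ.le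
  have heq : γ * (1 / γ - ε / γ) = 1 - ε := by field_simp
  rw [heq] at hmul
  exact hmul


lemma kappa_le_liminf_scale (d : ℕ) {s : ℝ} (hs : 0 < s)
    (v : ℝ → EuclideanSpace ℝ (Fin d) → ℝ)
    (hv1 : ∀ δ ∈ Set.Ioo (0:ℝ) 1, IntegrableOn (v δ) (cube d))
    (hv2 : Tendsto (fun δ => ∫ x in cube d, |v δ x - UU d x|) (𝓝[>] (0:ℝ)) (𝓝 0)) :
    kappa d (fun t => if t ≤ 1 then 0 else 1 / gammad d)
      ≤ liminf (fun δ => Lam d (s * δ) (fun t => if t ≤ 1 then 0 else 1 / gammad d)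
          (v δ) (cube d)) (𝓝[>] (0:ℝ)) := by
  set φ₁ : ℝ → ℝ := fun t => if t ≤ 1 then 0 else 1 / gammad d with hφ₁
  set w : ℝ → EuclideanSpace ℝ (Fin d) → ℝ :=
    fun η => if η / s ∈ Set.Ioo (0:ℝ) 1 then v (η / s) else v (1/2) with hw
  have hw1 : ∀ η ∈ Set.Ioo (0:ℝ) 1, IntegrableOn (w η) (cube d) := by
    intro η hη
    by_cases h : η / s ∈ Set.Ioo (0:ℝ) 1
    · simp only [hw, if_pos h]; exact hv1 _ h
    · simp only [hw, if_neg h]; exact hv1 _ (by norm_num)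
  have hdiv : Tendsto (fun η : ℝ => η / s) (𝓝[>] 0) (𝓝[>] 0) := by
    have h := tendsto_mul_left_nhdsGT_zero (show 0 < s⁻¹ by positivity)
    simpa [div_eq_inv_mul] using h
  have hev : ∀ᶠ η in 𝓝[>] (0:ℝ), η / s ∈ Set.Ioo (0:ℝ) 1 :=
    hdiv (Ioo_mem_nhdsGT_of_mem ⟨le_refl _, one_pos⟩)
  have hw2 : Tendsto (fun η => ∫ x in cube d, |w η x - UU d x|) (𝓝[>] (0:ℝ)) (𝓝 0) := by
    refine (hv2.comp hdiv).congr' ?_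
    refine hev.mono fun η h => ?_
    simp only [hw, if_pos h, Function.comp]
  have h1 : kappa d φ₁ ≤ liminf (fun η => Lam d η φ₁ (w η) (cube d)) (𝓝[>] (0:ℝ)) :=
    iInf_le_of_le w (iInf_le _ ⟨hw1, hw2⟩)
  refine h1.trans ?_
  refine (liminf_comp_mul_left hs (G := fun η => Lam d η φ₁ (w η) (cube d))).trans ?_
  refine le_of_eq (liminf_congr ?_)
  filter_upwards [Ioo_mem_nhdsGT_of_mem
    (show (0:ℝ) ∈ Ico (0:ℝ) 1 from ⟨le_refl _, one_pos⟩)] with δ hδ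
  have hδs : (s * δ) / s = δ := by field_simp
  have hwv : w (s * δ) = v δ := by
    simp only [hw, hδs, if_pos hδ]
  rw [hwv]

/-- Theorem: `κ(φ) ≥ κ(φ₁)` for every `φ ∈ 𝒜`, where `φ₁(t) = 0` for `t ≤ 1` and
`φ₁(t) = 1/γ_d` for `t > 1`. -/
theorem stmt17 (d : ℕ) (hd : 1 ≤ d) (φ : ℝ → ℝ) (hφ : MemA d φ) :
    kappa d (fun t => if t ≤ 1 then 0 else 1 / gammad d) ≤ kappa d φ := by
  have hγ : 0 < gammad d := gammad_pos d
  set φ₁ : ℝ → ℝ := fun t => if t ≤ 1 then 0 else 1 / gammad d with hφ₁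
  set K := kappa d φ₁ with hK
  rw [kappa]
  refine le_iInf₂ fun v hv => ?_
  obtain ⟨hv1, hv2⟩ := hv
  set L := liminf (fun δ => Lam d δ φ (v δ) (cube d)) (𝓝[>] (0:ℝ)) with hL
  have key : ∀ ε : ℝ, 0 < ε → ENNReal.ofReal (1 - ε) * K ≤ L := by
    intro ε hε
    obtain ⟨N, c, s, hs, hc, hle, hsum⟩ := grid_approx d φ hφ hε
    have hev : ∀ᶠ δ in 𝓝[>] (0:ℝ),
        (∑ k ∈ Finset.range N, ENNReal.ofReal (gammad d * c k / s k) *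
          Lam d (s k * δ) φ₁ (v δ) (cube d)) ≤ Lam d δ φ (v δ) (cube d) := by
      filter_upwards [self_mem_nhdsWithin] with δ (hδ : (0:ℝ) < δ)
      calc ∑ k ∈ Finset.range N, ENNReal.ofReal (gammad d * c k / s k) *
            Lam d (s k * δ) φ₁ (v δ) (cube d)
          = ∑ k ∈ Finset.range N,
            Lam d δ (fun t => c k * (if t ≤ s k then 0 else 1)) (v δ) (cube d) := by
            refine (Finset.sum_congr rfl fun k hk => ?_)
            exact (Lam_step_eq d hδ (hs k (Finset.mem_range.1 hk))
              (hc k (Finset.mem_range.1 hk)) (v δ) (cube d)).symm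
        _ ≤ Lam d δ (fun t => ∑ k ∈ Finset.range N,
              c k * (if t ≤ s k then 0 else 1)) (v δ) (cube d) := by
            refine sum_Lam_le d δ N _ (fun k hk t => ?_) (v δ) (cube d)
            have h1 : (0:ℝ) ≤ (if t ≤ s k then 0 else 1) := by split <;> norm_num
            have h2 := hc k (Finset.mem_range.1 hk)
            positivity
        _ ≤ Lam d δ φ (v δ) (cube d) := Lam_mono_phi d hδ hle (v δ) (cube d)
    have h2 : (∑ k ∈ Finset.range N, ENNReal.ofReal (gammad d * c k / s k)) * K ≤ L := by
      rw [Finset.sum_mul]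
      calc ∑ k ∈ Finset.range N, ENNReal.ofReal (gammad d * c k / s k) * K
          ≤ ∑ k ∈ Finset.range N, ENNReal.ofReal (gammad d * c k / s k) *
              liminf (fun δ => Lam d (s k * δ) φ₁ (v δ) (cube d)) (𝓝[>] (0:ℝ)) := by
            refine Finset.sum_le_sum fun k hk => ?_
            exact mul_le_mul_right
              (kappa_le_liminf_scale d (hs k (Finset.mem_range.1 hk)) v hv1 hv2) _
        _ ≤ ∑ k ∈ Finset.range N, liminf (fun δ => ENNReal.ofReal (gammad d * c k / s k) *
              Lam d (s k * δ) φ₁ (v δ) (cube d)) (𝓝[>] (0:ℝ)) :=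
            Finset.sum_le_sum fun k _ => mul_liminf_le _ _
        _ ≤ liminf (fun δ => ∑ k ∈ Finset.range N, ENNReal.ofReal (gammad d * c k / s k) *
              Lam d (s k * δ) φ₁ (v δ) (cube d)) (𝓝[>] (0:ℝ)) := sum_liminf_le N _
        _ ≤ L := liminf_le_liminf hev
    refine le_trans ?_ h2
    refine mul_le_mul_left ?_ K
    rw [← ENNReal.ofReal_sum_of_nonneg (fun k hk => by
      have h1 := hs k (Finset.mem_range.1 hk)
      have h2 := hc k (Finset.mem_range.1 hk)
      positivity)]
    refine ENNReal.ofReal_le_ofReal ?_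
    calc 1 - ε ≤ gammad d * ∑ k ∈ Finset.range N, c k / s k := hsum
      _ = ∑ k ∈ Finset.range N, gammad d * c k / s k := by
          rw [Finset.mul_sum]
          exact Finset.sum_congr rfl fun k _ => (mul_div_assoc _ _ _).symm
  by_cases hKtop : K = ⊤
  · have h12 := key (1/2) (by norm_num)
    rw [hKtop, ENNReal.mul_top (by simp; norm_num : ENNReal.ofReal (1 - 1/2) ≠ 0)] at h12
    exact le_trans (by rw [hKtop]) h12
  · have htends : Tendsto (fun n : ℕ => ENNReal.ofReal (1 - 1/((n:ℝ)+1)) * K) atTop (𝓝 K) := by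
      have h0 : Tendsto (fun n : ℕ => (1 - 1/((n:ℝ)+1))) atTop (𝓝 1) := by
        have := tendsto_one_div_add_atTop_nhds_zero_nat (𝕜 := ℝ)
        have h1 := this.const_sub 1
        simpa using h1
      have h1 := (ENNReal.continuous_ofReal.tendsto 1).comp h0
      have h2 := ENNReal.Tendsto.mul_const h1 (Or.inr hKtop)
      simpa using h2
    refine le_of_tendsto htends ?_
    filter_upwards with n
    exact key (1/((n:ℝ)+1)) (by positivity)
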